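/- arXiv:1911.05390 — 6 statements merged into one kernel-verified Lean document; each statement's English description precedes it below -/
import Mathlib

section
/- A soft topological space (X,T,A) is soft T_{1^k} if and only if for each x ∈ X, the soft set (F_x,A) with F_x(a) = {x} for all a ∈ A is soft closed. -/
namespace SoftPaper

variable {X Y Z A B C : Type*}

/-- A point `x` belongs to the soft set `F` if `x ∈ F a` for all parameters `a`. -/
def SoftMem (x : X) (F : A → Set X) : Prop := ∀ a, x ∈ F a

/-- Soft complement: `a ↦ X \ F a`. -/
def softCompl (F : A → Set X) : A → Set X := fun a => (F a)ᶜ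

/-- A soft topology: contains `0_A`, `1_A`, closed under pairwise intersection and
arbitrary union. -/
def IsSoftTopology (T : Set (A → Set X)) : Prop :=
  (fun _ => (∅ : Set X)) ∈ T ∧ (fun _ => (Set.univ : Set X)) ∈ T ∧
  (∀ F ∈ T, ∀ G ∈ T, (fun a => F a ∩ G a) ∈ T) ∧
  (∀ S : Set (A → Set X), S ⊆ T → (fun a => ⋃ F ∈ S, F a) ∈ T)

/-- `x ≈ y`: each soft open set containing `x` contains `y` and vice versa. -/
def SoftApprox (T : Set (A → Set X)) (x y : X) : Prop :=
  (∀ F ∈ T, SoftMem x F → SoftMem y F) ∧ (∀ F ∈ T, SoftMem y F → SoftMem x F)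

def SoftT0 (T : Set (A → Set X)) : Prop :=
  ∀ x y : X, x ≠ y → ∃ F ∈ T,
    (SoftMem x F ∧ ¬ SoftMem y F) ∨ (SoftMem y F ∧ ¬ SoftMem x F)

def SoftT0U (T : Set (A → Set X)) : Prop :=
  ∀ x y : X, SoftApprox T x y → ∀ a : A, ∀ F ∈ T, (x ∈ F a ↔ y ∈ F a)

def SoftT0k (T : Set (A → Set X)) : Prop :=
  ∀ x y : X, x ≠ y →
    (∃ F ∈ T, SoftMem x F ∧ SoftMem y (softCompl F)) ∨
    (∃ G ∈ T, SoftMem y G ∧ SoftMem x (softCompl G))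

def SoftT1 (T : Set (A → Set X)) : Prop :=
  ∀ x y : X, x ≠ y → ∃ F ∈ T, ∃ G ∈ T,
    SoftMem x F ∧ ¬ SoftMem y F ∧ SoftMem y G ∧ ¬ SoftMem x G

def SoftT1k (T : Set (A → Set X)) : Prop :=
  ∀ x y : X, x ≠ y → ∃ F ∈ T, ∃ G ∈ T,
    SoftMem x F ∧ SoftMem y (softCompl F) ∧ SoftMem y G ∧ SoftMem x (softCompl G)

def SoftDisjoint (F G : A → Set X) : Prop := ∀ a, F a ∩ G a = ∅

def SoftT2 (T : Set (A → Set X)) : Prop :=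
  ∀ x y : X, x ≠ y → ∃ F ∈ T, ∃ G ∈ T,
    SoftMem x F ∧ SoftMem y G ∧ SoftDisjoint F G

def SoftClosed (T : Set (A → Set X)) (F : A → Set X) : Prop := softCompl F ∈ T

def SoftSubset (F G : A → Set X) : Prop := ∀ a, F a ⊆ G a

def SoftKRegular (T : Set (A → Set X)) : Prop :=
  ∀ F : A → Set X, SoftClosed T F → ∀ x : X, SoftMem x (softCompl F) →
    ∃ G ∈ T, ∃ H ∈ T, SoftMem x G ∧ SoftSubset F H ∧ SoftDisjoint G H

def SoftRegular (T : Set (A → Set X)) : Prop :=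
  ∀ F : A → Set X, SoftClosed T F → ∀ x : X, ¬ SoftMem x F →
    ∃ G ∈ T, ∃ H ∈ T, SoftMem x G ∧ SoftSubset F H ∧ SoftDisjoint G H

def SoftClopen (T : Set (A → Set X)) (F : A → Set X) : Prop := F ∈ T ∧ softCompl F ∈ T

def SoftTotSep (T : Set (A → Set X)) : Prop :=
  ∀ x y : X, x ≠ y → ∃ F, SoftClopen T F ∧
    ((SoftMem x F ∧ ¬ SoftMem y F) ∨ (SoftMem y F ∧ ¬ SoftMem x F))

def SoftKTotSep (T : Set (A → Set X)) : Prop :=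
  ∀ x y : X, x ≠ y →
    (∃ F, SoftClopen T F ∧ SoftMem x F ∧ SoftMem y (softCompl F)) ∨
    (∃ G, SoftClopen T G ∧ SoftMem y G ∧ SoftMem x (softCompl G))

/-- Soft relative topology on a subset `S ⊆ X`, realized over the subtype `↥S`. -/
def SoftSubspace (T : Set (A → Set X)) (S : Set X) : Set (A → Set ↥S) :=
  {G | ∃ F ∈ T, G = fun a => Subtype.val ⁻¹' F a}

/-- Image of a soft set under a soft mapping `(f, e)`. -/
def softImage (f : X → Y) (e : A → B) (F : A → Set X) : B → Set Y :=
  fun b => ⋃ a ∈ e ⁻¹' {b}, f '' F a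

/-- Preimage of a soft set under a soft mapping `(f, e)`. -/
def softPreimage (f : X → Y) (e : A → B) (G : B → Set Y) : A → Set X :=
  fun a => f ⁻¹' G (e a)

def SoftContinuous (T : Set (A → Set X)) (T' : Set (B → Set Y))
    (f : X → Y) (e : A → B) : Prop :=
  ∀ G ∈ T', softPreimage f e G ∈ T

def SoftInitial (T : Set (A → Set X)) (T' : Set (B → Set Y))
    (f : X → Y) (e : A → B) : Prop :=
  ∀ F ∈ T, ∃ G ∈ T', F = softPreimage f e G

def SoftLocallyClosed (T' : Set (B → Set Y)) (L : B → Set Y) : Prop :=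
  ∃ Cs : B → Set Y, SoftClosed T' Cs ∧ ∃ O ∈ T', L = fun b => Cs b ∩ O b

/-- Soft quasihomeomorphism: soft initial and the image of `1_A` meets every
nonzero soft locally closed set. -/
def SoftQuasihomeo (T : Set (A → Set X)) (T' : Set (B → Set Y))
    (f : X → Y) (e : A → B) : Prop :=
  SoftInitial T T' f e ∧
  ∀ L : B → Set Y, SoftLocallyClosed T' L → (∃ b, (L b).Nonempty) →
    ∃ b, (softImage f e (fun _ => (Set.univ : Set X)) b ∩ L b).Nonempty

/-- The setoid on `X` given by `x ∼ y` iff `x ≈ y`. -/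
def approxSetoid (T : Set (A → Set X)) : Setoid X where
  r := SoftApprox T
  iseqv := ⟨fun _ => ⟨fun _ _ h => h, fun _ _ h => h⟩,
    fun h => ⟨h.2, h.1⟩,
    fun h1 h2 => ⟨fun F hF hx => h2.1 F hF (h1.1 F hF hx),
      fun F hF hz => h1.2 F hF (h2.2 F hF hz)⟩⟩

/-- The soft quotient topology on the `≈`-quotient. -/
def quotTopology (T : Set (A → Set X)) :
    Set (A → Set (Quotient (approxSetoid T))) :=
  {G | (fun a => Quotient.mk (approxSetoid T) ⁻¹' G a) ∈ T}

/-- A soft space is soft `T_{1^k}` iff each soft point `(F_x, A)` is soft closed. -/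
theorem softT1k_iff_points_closed {X A : Type*} (T : Set (A → Set X))
    (hT : IsSoftTopology T) :
    SoftT1k T ↔ ∀ x : X, SoftClosed T (fun _ => ({x} : Set X)) := by
  constructor
  · intro h x
    have key : (fun a => ⋃ G ∈ {G | G ∈ T ∧ ∀ a, G a ⊆ ({x} : Set X)ᶜ}, G a) ∈ T :=
      hT.2.2.2 _ (fun G hG => hG.1)
    have : softCompl (fun _ => ({x} : Set X)) =
        fun a => ⋃ G ∈ {G | G ∈ T ∧ ∀ a, G a ⊆ ({x} : Set X)ᶜ}, G a := by
      funext a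
      apply Set.Subset.antisymm
      · intro y hy
        have hxy : x ≠ y := fun e => hy (e ▸ rfl)
        obtain ⟨F, hF, G, hG, _, _, hyG, hxG⟩ := h x y hxy
        exact Set.mem_biUnion ⟨hG, fun a' z hz e => hxG a' (e ▸ hz)⟩ (hyG a)
      · intro y hy
        rcases Set.mem_iUnion₂.1 hy with ⟨G, hG, hyG⟩
        exact hG.2 a hyG
    unfold SoftClosed
    rw [this]
    exact key
  · intro h x y hxy
    refine ⟨softCompl (fun _ => ({y} : Set X)), h y, softCompl (fun _ => ({x} : Set X)), h x,
      fun a => hxy, fun a => ?_, fun a => hxy.symm, fun a => ?_⟩ <;>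
      simp [softCompl]

end SoftPaper
end

section
/- Every soft T_{3^k} space is soft T_2. -/
namespace SoftPaper

variable {X Y Z A B C : Type*}

/-- Every soft `T_{3^k}` space is soft `T₂`. -/
theorem softT3k_implies_softT2 {X A : Type*} (T : Set (A → Set X))
    (hT : IsSoftTopology T) (hreg : SoftKRegular T) (h1k : SoftT1k T) :
    SoftT2 T := by
  intro x y hxy
  obtain ⟨F, hF, _, _, hxF, hyF, _, _⟩ := h1k x y hxy
  have hclosed : SoftClosed T (softCompl F) := by
    have : softCompl (softCompl F) = F := by
      funext a; simp [softCompl]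
    rw [SoftClosed, this]; exact hF
  have hx : SoftMem x (softCompl (softCompl F)) := by
    intro a; simp [softCompl]; exact hxF a
  obtain ⟨G, hG, H, hH, hxG, hsub, hdisj⟩ := hreg (softCompl F) hclosed x hx
  exact ⟨G, hG, H, hH, hxG, fun a => hsub a (hyF a), hdisj⟩

end SoftPaper
end

section
/- Every soft subspace of a soft k-regular space is soft k-regular. -/
namespace SoftPaper

variable {X Y Z A B C : Type*}

/-- Every soft subspace of a soft k-regular space is soft k-regular. -/
theorem softKRegular_subspace {X A : Type*} (T : Set (A → Set X))
    (hT : IsSoftTopology T) (h : SoftKRegular T) (S : Set X) (hS : S.Nonempty) :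
    SoftKRegular (SoftSubspace T S) := by
  intro F hF x hx
  obtain ⟨F', hF', hFeq⟩ := hF
  -- F a = (Subtype.val ⁻¹' F' a)ᶜ
  have hFa : ∀ a, F a = (Subtype.val ⁻¹' F' a)ᶜ := by
    intro a
    have := congrFun hFeq a
    simpa [softCompl] using congrArg compl this
  -- x.val belongs to every F' a
  have hxF' : ∀ a, (x : X) ∈ F' a := by
    intro a
    have := hx a
    simp only [softCompl, hFa a, Set.mem_compl_iff, not_not] at this
    exact this
  -- apply k-regularity to the closed set softCompl F'
  have hclosed : SoftClosed T (softCompl F') := by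
    have : softCompl (softCompl F') = F' := by
      funext a; simp [softCompl]
    simpa [SoftClosed, this] using hF'
  obtain ⟨G, hG, H, hH, hxG, hsub, hdisj⟩ :=
    h (softCompl F') hclosed (x : X) (by intro a; simpa [softCompl] using hxF' a)
  refine ⟨fun a => Subtype.val ⁻¹' G a, ⟨G, hG, rfl⟩,
    fun a => Subtype.val ⁻¹' H a, ⟨H, hH, rfl⟩, ?_, ?_, ?_⟩
  · intro a; exact hxG a
  · intro a y hy
    have : (y : X) ∉ F' a := by
      rw [hFa a] at hy; simpa using hy
    exact hsub a this
  · intro a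
    ext y
    simp only [Set.mem_inter_iff, Set.mem_preimage, Set.mem_empty_iff_false, iff_false]
    intro ⟨h1, h2⟩
    have := hdisj a
    have : (y : X) ∈ G a ∩ H a := ⟨h1, h2⟩
    rw [hdisj a] at this
    exact this

end SoftPaper
end

section
/- The property of being soft T_{0^k} is preserved by soft homeomorphisms: if (f,e) : (X,T,A) → (X',T',B) is soft bijective, soft continuous with soft continuous inverse, and (X,T,A) is soft T_{0^k}, then so is (X',T',B). -/
namespace SoftPaper

variable {X Y Z A B C : Type*}

/-- Soft `T_{0^k}` is preserved by soft homeomorphisms. -/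
theorem softT0k_of_softHomeomorph {X X' A B : Type*}
    (T : Set (A → Set X)) (T' : Set (B → Set X'))
    (hT : IsSoftTopology T) (hT' : IsSoftTopology T')
    (f : X → X') (e : A → B) (g : X' → X) (e' : B → A)
    (hgf : Function.LeftInverse g f) (hfg : Function.RightInverse g f)
    (hee : Function.LeftInverse e' e) (hee' : Function.RightInverse e' e)
    (hcont : SoftContinuous T T' f e)
    (hcont_inv : SoftContinuous T' T g e')
    (h0k : SoftT0k T) : SoftT0k T' := by
  intro x y hxy
  have hne : g x ≠ g y := fun h => hxy (by rw [← hfg x, ← hfg y, h])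
  rcases h0k (g x) (g y) hne with ⟨F, hF, hxF, hyF⟩ | ⟨F, hF, hxF, hyF⟩
  · exact Or.inl ⟨softPreimage g e' F, hcont_inv F hF,
      fun b => hxF (e' b), fun b => hyF (e' b)⟩
  · exact Or.inr ⟨softPreimage g e' F, hcont_inv F hF,
      fun b => hxF (e' b), fun b => hyF (e' b)⟩

end SoftPaper
end

section
/- The quotient space (X_0, T_0, A) of a soft T_{0U} space (X,T,A) by the relation x ∼ y iff x ≈ y, equipped with the soft quotient topology, is soft T_0. -/
namespace SoftPaper

variable {X Y Z A B C : Type*}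

/-- The soft quotient of a soft `T_{0U}` space by `≈` is soft `T₀`. -/
theorem quotient_softT0 {X A : Type*} (T : Set (A → Set X))
    (hT : IsSoftTopology T) (h0U : SoftT0U T) :
    SoftT0 (quotTopology T) := by
  have key : ∀ x y : X, ∀ F ∈ T, SoftMem x F → ¬ SoftMem y F →
      ∃ G ∈ quotTopology T, SoftMem (⟦x⟧ : Quotient (approxSetoid T)) G ∧
        ¬ SoftMem (⟦y⟧ : Quotient (approxSetoid T)) G := by
    intro x y F hF hx hy
    refine ⟨fun a => Quotient.mk (approxSetoid T) '' F a, ?_, ?_, ?_⟩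
    · have heq : (fun a => Quotient.mk (approxSetoid T) ⁻¹'
          (Quotient.mk (approxSetoid T) '' F a)) = F := by
        funext a; ext z
        simp only [Set.mem_preimage, Set.mem_image]
        constructor
        · rintro ⟨w, hw, hwz⟩
          exact (h0U w z (Quotient.exact hwz) a F hF).mp hw
        · intro hz; exact ⟨z, hz, rfl⟩
      show (fun a => Quotient.mk (approxSetoid T) ⁻¹' _) ∈ T
      rw [heq]; exact hF
    · intro a; exact ⟨x, hx a, rfl⟩
    · intro hmem
      apply hy; intro a
      obtain ⟨w, hw, hwz⟩ := hmem a
      exact (h0U w y (Quotient.exact hwz) a F hF).mp hw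
  intro p q hpq
  obtain ⟨x, rfl⟩ := Quotient.exists_rep p
  obtain ⟨y, rfl⟩ := Quotient.exists_rep q
  have hna : ¬ SoftApprox T x y := fun h => hpq (Quotient.sound h)
  rw [SoftApprox, not_and_or] at hna
  rcases hna with h | h
  · push_neg at h
    obtain ⟨F, hF, hx, hy⟩ := h
    obtain ⟨G, hG, h1, h2⟩ := key x y F hF hx hy
    exact ⟨G, hG, Or.inl ⟨h1, h2⟩⟩
  · push_neg at h
    obtain ⟨F, hF, hy, hx⟩ := h
    obtain ⟨G, hG, h1, h2⟩ := key y x F hF hy hx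
    exact ⟨G, hG, Or.inr ⟨h1, h2⟩⟩

end SoftPaper
end

section
/- Let (f,e) be a soft quasihomeomorphism from (X,T,A) to (Y,T',B). If (X,T,A) is soft T_0 and e is injective, then f is injective. -/
namespace SoftPaper

variable {X Y Z A B C : Type*}

/-- If `(f,e)` is a soft quasihomeomorphism, the domain is soft `T₀` and `e` is
injective, then `f` is injective. -/
theorem quasihomeo_injective {X Y A B : Type*}
    (T : Set (A → Set X)) (T' : Set (B → Set Y))
    (hT : IsSoftTopology T) (hT' : IsSoftTopology T')
    (f : X → Y) (e : A → B)
    (hcont : SoftContinuous T T' f e)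
    (hq : SoftQuasihomeo T T' f e)
    (h0 : SoftT0 T) (he : Function.Injective e) :
    Function.Injective f := by
  intro x y hfxy
  by_contra hne
  obtain ⟨F, hF, hsep⟩ := h0 x y hne
  obtain ⟨G, _, rfl⟩ := hq.1 F hF
  have key : SoftMem x (softPreimage f e G) ↔ SoftMem y (softPreimage f e G) := by
    unfold SoftMem softPreimage
    simp only [Set.mem_preimage, hfxy]
  rcases hsep with ⟨hx, hy⟩ | ⟨hy, hx⟩
  · exact hy (key.mp hx)
  · exact hx (key.mpr hy)

end SoftPaper
end
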